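/- In the integral quandle ring Z[R_5] of the dihedral quandle of order 5, the elements F_1 = E_1 - E_2 - E_4, F_2 = E_2 - E_3 - E_4, F_3 = E_3 + 3E_4, F_4 = 5E_4 form a Z-basis of the square Δ²(R_5) of the augmentation ideal. -/

import Mathlib

/-- Product on the quandle ring ℤ[R_5]: e_x · e_y = e_{2y-x}. -/
def qr (u v : ZMod 5 → ℤ) : ZMod 5 → ℤ :=
  fun z => ∑ x, ∑ y, if 2 * y - x = z then u x * v y else 0

/-- Basis element e_i. -/
def e (i : ZMod 5) : ZMod 5 → ℤ := fun z => if z = i then 1 else 0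

/-- E_i = e_i - e_0. -/
def E (i : ZMod 5) : ZMod 5 → ℤ := e i - e 0

/-- The augmentation ideal Δ(R_5) = {u | ε(u) = 0}. -/
def Δ : Set (ZMod 5 → ℤ) := {u | ∑ x, u x = 0}

def F : Fin 4 → (ZMod 5 → ℤ) :=
  ![E 1 - E 2 - E 4, E 2 - E 3 - E 4, E 3 + (3 : ℤ) • E 4, (5 : ℤ) • E 4]

lemma sum5 {M : Type*} [AddCommMonoid M] (f : ZMod 5 → M) :
    ∑ x, f x = f 0 + f 1 + f 2 + f 3 + f 4 := by
  show ∑ x : Fin 5, f x = _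
  exact Fin.sum_univ_five f

lemma h5 : (5 : ZMod 5) = 0 := by decide

lemma qr_eq (u v : ZMod 5 → ℤ) (z : ZMod 5) :
    qr u v z = ∑ x, u x * v (3 * (x + z)) := by
  unfold qr
  refine Finset.sum_congr rfl fun x _ => ?_
  rw [Finset.sum_eq_single_of_mem (3 * (x + z)) (Finset.mem_univ _)]
  · rw [if_pos (by linear_combination (x + z) * h5)]
  · intro y _ hy
    rw [if_neg]
    intro h
    exact hy (by linear_combination 3 * h - y * h5)

lemma qrA0 (u v : ZMod 5 → ℤ) : qr u v 0 = u 0 * v 0 + u 1 * v 3 + u 2 * v 1 + u 3 * v 4 + u 4 * v 2 := by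
  rw [qr_eq, sum5]; norm_num
  rw [show (6:ZMod 5) = 1 from by decide, show (9:ZMod 5) = 4 from by decide, show (12:ZMod 5) = 2 from by decide]

lemma qrA1 (u v : ZMod 5 → ℤ) : qr u v 1 = u 0 * v 3 + u 1 * v 1 + u 2 * v 4 + u 3 * v 2 + u 4 * v 0 := by
  rw [qr_eq, sum5]; norm_num
  rw [show (6:ZMod 5) = 1 from by decide, show (9:ZMod 5) = 4 from by decide, show (12:ZMod 5) = 2 from by decide, show (15:ZMod 5) = 0 from by decide]

lemma qrA2 (u v : ZMod 5 → ℤ) : qr u v 2 = u 0 * v 1 + u 1 * v 4 + u 2 * v 2 + u 3 * v 0 + u 4 * v 3 := by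
  rw [qr_eq, sum5]; norm_num
  rw [show (6:ZMod 5) = 1 from by decide, show (9:ZMod 5) = 4 from by decide, show (12:ZMod 5) = 2 from by decide, show (15:ZMod 5) = 0 from by decide, show (18:ZMod 5) = 3 from by decide]

lemma qrA3 (u v : ZMod 5 → ℤ) : qr u v 3 = u 0 * v 4 + u 1 * v 2 + u 2 * v 0 + u 3 * v 3 + u 4 * v 1 := by
  rw [qr_eq, sum5]; norm_num
  rw [show (9:ZMod 5) = 4 from by decide, show (12:ZMod 5) = 2 from by decide, show (15:ZMod 5) = 0 from by decide, show (18:ZMod 5) = 3 from by decide, show (21:ZMod 5) = 1 from by decide]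

lemma qrA4 (u v : ZMod 5 → ℤ) : qr u v 4 = u 0 * v 2 + u 1 * v 0 + u 2 * v 3 + u 3 * v 1 + u 4 * v 4 := by
  rw [qr_eq, sum5]; norm_num
  rw [show (12:ZMod 5) = 2 from by decide, show (15:ZMod 5) = 0 from by decide, show (18:ZMod 5) = 3 from by decide, show (21:ZMod 5) = 1 from by decide, show (24:ZMod 5) = 4 from by decide]

lemma Fv00 : F 0 0 = 1 := by decide
lemma Fv01 : F 0 1 = 1 := by decide
lemma Fv02 : F 0 2 = -1 := by decide
lemma Fv03 : F 0 3 = 0 := by decide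
lemma Fv04 : F 0 4 = -1 := by decide
lemma Fv10 : F 1 0 = 1 := by decide
lemma Fv11 : F 1 1 = 0 := by decide
lemma Fv12 : F 1 2 = 1 := by decide
lemma Fv13 : F 1 3 = -1 := by decide
lemma Fv14 : F 1 4 = -1 := by decide
lemma Fv20 : F 2 0 = -4 := by decide
lemma Fv21 : F 2 1 = 0 := by decide
lemma Fv22 : F 2 2 = 0 := by decide
lemma Fv23 : F 2 3 = 1 := by decide
lemma Fv24 : F 2 4 = 3 := by decide
lemma Fv30 : F 3 0 = -5 := by decide
lemma Fv31 : F 3 1 = 0 := by decide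
lemma Fv32 : F 3 2 = 0 := by decide
lemma Fv33 : F 3 3 = 0 := by decide
lemma Fv34 : F 3 4 = 5 := by decide

lemma ext5 {f g : ZMod 5 → ℤ} (h0 : f 0 = g 0) (h1 : f 1 = g 1) (h2 : f 2 = g 2)
    (h3 : f 3 = g 3) (h4 : f 4 = g 4) : f = g := by
  funext z
  fin_cases z
  exacts [h0, h1, h2, h3, h4]

lemma prod_eps (u v : ZMod 5 → ℤ) (hu : ∑ x, u x = 0) (_hv : ∑ x, v x = 0) :
    ∑ z, qr u v z = 0 := by
  rw [sum5] at hu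
  rw [sum5, qrA0, qrA1, qrA2, qrA3, qrA4]
  linear_combination (v 0 + v 1 + v 2 + v 3 + v 4) * hu

lemma prod_dvd (u v : ZMod 5 → ℤ) (hu : ∑ x, u x = 0) (hv : ∑ x, v x = 0) :
    (5:ℤ) ∣ qr u v 1 + 2 * qr u v 2 + 3 * qr u v 3 + 4 * qr u v 4 := by
  rw [sum5] at hu hv
  rw [qrA1, qrA2, qrA3, qrA4]
  refine ⟨- u 0 * v 3 - u 0 * v 4 + u 1 * v 0 - u 1 * v 3 - u 1 * v 4 + u 2 * v 0
      - u 2 * v 4 + u 3 * v 0 + u 3 * v 1 - u 3 * v 4 + u 4 * v 0 + u 4 * v 1, ?_⟩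
  linear_combination (2 * (v 1 + 2 * v 2 + 3 * v 3 + 4 * v 4)) * hu
    - (u 1 + 2 * u 2 + 3 * u 3 + 4 * u 4) * hv

lemma mem_of (w : ZMod 5 → ℤ) (h0 : ∑ x, w x = 0)
    (hd : (5:ℤ) ∣ w 1 + 2 * w 2 + 3 * w 3 + 4 * w 4) :
    w ∈ AddSubgroup.closure (Set.range F) := by
  obtain ⟨m, hm⟩ := hd
  rw [sum5] at h0
  have hw : w = w 1 • F 0 + (w 1 + w 2) • F 1 + (w 1 + w 2 + w 3) • F 2 + (w 4 - m) • F 3 := by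
    refine ext5 ?_ ?_ ?_ ?_ ?_ <;>
      simp only [Pi.add_apply, Pi.smul_apply, smul_eq_mul,
        Fv00, Fv01, Fv02, Fv03, Fv04, Fv10, Fv11, Fv12, Fv13, Fv14,
        Fv20, Fv21, Fv22, Fv23, Fv24, Fv30, Fv31, Fv32, Fv33, Fv34] <;>
      linarith
  rw [hw]
  exact add_mem (add_mem (add_mem
      (AddSubgroup.zsmul_mem _ (AddSubgroup.subset_closure (Set.mem_range_self (0 : Fin 4))) _)
      (AddSubgroup.zsmul_mem _ (AddSubgroup.subset_closure (Set.mem_range_self (1 : Fin 4))) _))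
      (AddSubgroup.zsmul_mem _ (AddSubgroup.subset_closure (Set.mem_range_self (2 : Fin 4))) _))
      (AddSubgroup.zsmul_mem _ (AddSubgroup.subset_closure (Set.mem_range_self (3 : Fin 4))) _)

/-- F_1 = E_1 - E_2 - E_4, F_2 = E_2 - E_3 - E_4, F_3 = E_3 + 3E_4, F_4 = 5E_4
form a ℤ-basis of Δ²(R_5): they generate Δ² as an abelian group and are
linearly independent over ℤ. -/
theorem stmt12 :
    AddSubgroup.closure {w : ZMod 5 → ℤ | ∃ u ∈ Δ, ∃ v ∈ Δ, w = qr u v}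
      = AddSubgroup.closure (Set.range F) ∧
    LinearIndependent ℤ F := by
  constructor
  · apply le_antisymm
    · rw [AddSubgroup.closure_le]
      rintro w ⟨u, hu, v, hv, rfl⟩
      exact mem_of _ (prod_eps u v hu hv) (prod_dvd u v hu hv)
    · rw [AddSubgroup.closure_le]
      rintro w ⟨i, rfl⟩
      have hE1 : E 1 ∈ Δ := by show ∑ x, E 1 x = 0; decide
      have hE2 : E 2 ∈ Δ := by show ∑ x, E 2 x = 0; decide
      have hE3 : E 3 ∈ Δ := by show ∑ x, E 3 x = 0; decide
      have hE4 : E 4 ∈ Δ := by show ∑ x, E 4 x = 0; decide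
      have m11 : qr (E 1) (E 1) ∈ AddSubgroup.closure
          {w : ZMod 5 → ℤ | ∃ u ∈ Δ, ∃ v ∈ Δ, w = qr u v} :=
        AddSubgroup.subset_closure ⟨E 1, hE1, E 1, hE1, rfl⟩
      have m12 : qr (E 1) (E 2) ∈ AddSubgroup.closure
          {w : ZMod 5 → ℤ | ∃ u ∈ Δ, ∃ v ∈ Δ, w = qr u v} :=
        AddSubgroup.subset_closure ⟨E 1, hE1, E 2, hE2, rfl⟩
      have m13 : qr (E 1) (E 3) ∈ AddSubgroup.closure
          {w : ZMod 5 → ℤ | ∃ u ∈ Δ, ∃ v ∈ Δ, w = qr u v} :=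
        AddSubgroup.subset_closure ⟨E 1, hE1, E 3, hE3, rfl⟩
      have m14 : qr (E 1) (E 4) ∈ AddSubgroup.closure
          {w : ZMod 5 → ℤ | ∃ u ∈ Δ, ∃ v ∈ Δ, w = qr u v} :=
        AddSubgroup.subset_closure ⟨E 1, hE1, E 4, hE4, rfl⟩
      have m31 : qr (E 3) (E 1) ∈ AddSubgroup.closure
          {w : ZMod 5 → ℤ | ∃ u ∈ Δ, ∃ v ∈ Δ, w = qr u v} :=
        AddSubgroup.subset_closure ⟨E 3, hE3, E 1, hE1, rfl⟩
      have hF0 : F 0 ∈ AddSubgroup.closure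
          {w : ZMod 5 → ℤ | ∃ u ∈ Δ, ∃ v ∈ Δ, w = qr u v} := by
        rw [show F 0 = qr (E 1) (E 1) from by decide]; exact m11
      have hF1 : F 1 ∈ AddSubgroup.closure
          {w : ZMod 5 → ℤ | ∃ u ∈ Δ, ∃ v ∈ Δ, w = qr u v} := by
        rw [show F 1 = qr (E 1) (E 4) from by decide]; exact m14
      have hF2 : F 2 ∈ AddSubgroup.closure
          {w : ZMod 5 → ℤ | ∃ u ∈ Δ, ∃ v ∈ Δ, w = qr u v} := by
        rw [show F 2 = qr (E 1) (E 2) + qr (E 3) (E 1)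
            + (-2 : ℤ) • qr (E 1) (E 1) + (-2 : ℤ) • qr (E 1) (E 3) from by decide]
        exact add_mem (add_mem (add_mem m12 m31) (AddSubgroup.zsmul_mem _ m11 _))
          (AddSubgroup.zsmul_mem _ m13 _)
      have hF3 : F 3 ∈ AddSubgroup.closure
          {w : ZMod 5 → ℤ | ∃ u ∈ Δ, ∃ v ∈ Δ, w = qr u v} := by
        rw [show F 3 = qr (E 3) (E 1)
            + (-2 : ℤ) • qr (E 1) (E 1) + (-2 : ℤ) • qr (E 1) (E 3) from by decide]
        exact add_mem (add_mem m31 (AddSubgroup.zsmul_mem _ m11 _))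
          (AddSubgroup.zsmul_mem _ m13 _)
      fin_cases i <;> first | exact hF0 | exact hF1 | exact hF2 | exact hF3
  · rw [Fintype.linearIndependent_iff]
    intro g hg
    have h1 := congrFun hg 1
    have h2 := congrFun hg 2
    have h3 := congrFun hg 3
    have h4 := congrFun hg 4
    simp only [Finset.sum_apply, Fin.sum_univ_four, Pi.smul_apply, smul_eq_mul,
      Fv01, Fv02, Fv03, Fv04, Fv11, Fv12, Fv13, Fv14,
      Fv21, Fv22, Fv23, Fv24, Fv31, Fv32, Fv33, Fv34, Pi.zero_apply] at h1 h2 h3 h4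
    have hg0 : g 0 = 0 := by omega
    have hg1 : g 1 = 0 := by omega
    have hg2 : g 2 = 0 := by omega
    have hg3 : g 3 = 0 := by omega
    intro i
    fin_cases i <;> first | exact hg0 | exact hg1 | exact hg2 | exact hg3
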